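/- arXiv:2504.05465 — 2 statements merged into one kernel-verified Lean document; each statement's English description precedes it below -/
import Mathlib

section
/- Let F, F' be d×d real matrices with all singular values of F bounded below by σ̲ > 0 (in particular F invertible), and suppose the map F ↦ R(F)^T F (with R(F) the orthogonal polar factor) is Lipschitz in Frobenius norm with modulus √2 on the set of invertible matrices with positive determinant. Then ‖R(F) − R(F')‖_F ≤ (√2 + √3)·√(d)·σ̲^{−1}·‖F − F'‖_F, assuming F' also has polar factor R(F') with ‖R(F')‖_F ≤ √3 (i.e., d = 3). -/
/-!
Since `F` is invertible, `Rᵀ - R'ᵀ = (RᵀF - R'ᵀF) F⁻¹`. Splitting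
`RᵀF - R'ᵀF = (RᵀF - R'ᵀF') + R'ᵀ(F' - F)` bounds the first factor by `(√2 + √3)‖F - F'‖`,
and the lower bound `σ̲` on the singular values bounds every column of `F⁻¹` by `σ̲⁻¹`, hence
`‖F⁻¹‖ ≤ √d σ̲⁻¹`.
-/

open Matrix

/-- Frobenius norm of a real matrix. -/
noncomputable def frob {d : ℕ} (A : Matrix (Fin d) (Fin d) ℝ) : ℝ :=
  Real.sqrt (∑ i, ∑ j, (A i j) ^ 2)

/-- Euclidean norm of a vector. -/
noncomputable def evnorm {d : ℕ} (v : Fin d → ℝ) : ℝ :=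
  Real.sqrt (∑ i, (v i) ^ 2)

attribute [local instance] Matrix.frobeniusNormedAddCommGroup Matrix.frobeniusNormedRing

variable {d : ℕ}

lemma frob_eq_norm (A : Matrix (Fin d) (Fin d) ℝ) : frob A = ‖A‖ := by
  rw [frob, frobenius_norm_def, Real.sqrt_eq_rpow]
  congr 1
  exact Finset.sum_congr rfl fun i _ => Finset.sum_congr rfl fun j _ => by
    rw [Real.norm_eq_abs, Real.rpow_two, sq_abs]

lemma frob_nonneg (A : Matrix (Fin d) (Fin d) ℝ) : 0 ≤ frob A := Real.sqrt_nonneg _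

lemma frob_transpose (A : Matrix (Fin d) (Fin d) ℝ) : frob Aᵀ = frob A := by
  rw [frob_eq_norm, frob_eq_norm, frobenius_norm_transpose]

lemma frob_mul_le (A B : Matrix (Fin d) (Fin d) ℝ) : frob (A * B) ≤ frob A * frob B := by
  simp only [frob_eq_norm]
  exact norm_mul_le A B

lemma frob_sub_le_frob_sub_add_frob_sub (A B C : Matrix (Fin d) (Fin d) ℝ) :
    frob (A - C) ≤ frob (A - B) + frob (B - C) := by
  simp only [frob_eq_norm]
  exact norm_sub_le_norm_sub_add_norm_sub A B C

lemma frob_le_sqrt_card_mul_of_col_le (A : Matrix (Fin d) (Fin d) ℝ) {c : ℝ} (hc : 0 ≤ c)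
    (hcol : ∀ j, evnorm (A.col j) ≤ c) : frob A ≤ √d * c := by
  have hcol_sq : ∀ j, ∑ i, A i j ^ 2 ≤ c ^ 2 := fun j =>
    (Real.sqrt_le_left hc).mp (hcol j)
  calc frob A ≤ √(d * c ^ 2) := by
        refine Real.sqrt_le_sqrt ?_
        rw [Finset.sum_comm]
        simpa using Finset.sum_le_sum fun j (_ : j ∈ Finset.univ) => hcol_sq j
    _ = √d * c := by rw [Real.sqrt_mul (Nat.cast_nonneg d), Real.sqrt_sq hc]

lemma evnorm_single_one (j : Fin d) : evnorm (Pi.single j 1 : Fin d → ℝ) = 1 := by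
  have hsum : ∑ i, (Pi.single j 1 : Fin d → ℝ) i ^ 2 = 1 := by
    simp [Pi.single_apply, apply_ite (· ^ 2), Finset.sum_ite_eq']
  rw [evnorm, hsum, Real.sqrt_one]

lemma evnorm_mulVec_le_of_mul_eq_one {F G : Matrix (Fin d) (Fin d) ℝ} {σ : ℝ} (hσ : 0 < σ)
    (hFG : F * G = 1) (hsing : ∀ x, σ * evnorm x ≤ evnorm (F *ᵥ x)) (y : Fin d → ℝ) :
    evnorm (G *ᵥ y) ≤ σ⁻¹ * evnorm y := by
  rw [le_inv_mul_iff₀ hσ]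
  simpa [mulVec_mulVec, hFG] using hsing (G *ᵥ y)

lemma frob_inv_le_of_singular_value_ge {F : Matrix (Fin d) (Fin d) ℝ} {σ : ℝ} (hσ : 0 < σ)
    (hdet : IsUnit F.det) (hsing : ∀ x, σ * evnorm x ≤ evnorm (F *ᵥ x)) :
    frob F⁻¹ ≤ √d * σ⁻¹ := by
  refine frob_le_sqrt_card_mul_of_col_le _ (inv_nonneg.mpr hσ.le) fun j => ?_
  have h := evnorm_mulVec_le_of_mul_eq_one hσ (mul_nonsing_inv F hdet) hsing (Pi.single j 1)
  rwa [mulVec_single_one, evnorm_single_one, mul_one] at h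

lemma frob_sub_le_frob_mul_frob_inv (R R' F : Matrix (Fin d) (Fin d) ℝ) (hdet : IsUnit F.det) :
    frob (R - R') ≤ frob (Rᵀ * F - R'ᵀ * F) * frob F⁻¹ := by
  have hfactor : Rᵀ - R'ᵀ = (Rᵀ * F - R'ᵀ * F) * F⁻¹ := by
    rw [sub_mul, mul_assoc, mul_assoc, mul_nonsing_inv F hdet, mul_one, mul_one]
  rw [← frob_transpose, transpose_sub, hfactor]
  exact frob_mul_le _ _

lemma frob_transpose_mul_sub_le (R R' F F' : Matrix (Fin d) (Fin d) ℝ) :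
    frob (Rᵀ * F - R'ᵀ * F) ≤ frob (Rᵀ * F - R'ᵀ * F') + frob R' * frob (F - F') := by
  calc frob (Rᵀ * F - R'ᵀ * F)
      ≤ frob (Rᵀ * F - R'ᵀ * F') + frob (R'ᵀ * (F' - F)) := by
        simpa [mul_sub] using frob_sub_le_frob_sub_add_frob_sub (Rᵀ * F) (R'ᵀ * F') (R'ᵀ * F)
    _ ≤ frob (Rᵀ * F - R'ᵀ * F') + frob R' * frob (F - F') := by
        grw [frob_mul_le, frob_transpose, ← neg_sub F, frob_eq_norm (-_), norm_neg, ← frob_eq_norm]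

theorem stmt7_general (F F' R R' : Matrix (Fin 3) (Fin 3) ℝ)
    (σlo : ℝ) (hσ : 0 < σlo)
    (hdetF : 0 < F.det)
    (hsing : ∀ x : Fin 3 → ℝ, σlo * evnorm x ≤ evnorm (F.mulVec x))
    (hR'norm : frob R' ≤ Real.sqrt 3)
    (hlip : frob (Rᵀ * F - R'ᵀ * F') ≤ Real.sqrt 2 * frob (F - F')) :
    frob (R - R') ≤ (Real.sqrt 2 + Real.sqrt 3) * Real.sqrt 3 * σlo⁻¹ * frob (F - F') := by
  have hdet : IsUnit F.det := hdetF.ne'.isUnit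
  have hinv : frob F⁻¹ ≤ √3 * σlo⁻¹ := by
    simpa using frob_inv_le_of_singular_value_ge hσ hdet hsing
  have hD : 0 ≤ frob (F - F') := frob_nonneg _
  calc frob (R - R') ≤ frob (Rᵀ * F - R'ᵀ * F) * frob F⁻¹ :=
        frob_sub_le_frob_mul_frob_inv R R' F hdet
    _ ≤ (√2 * frob (F - F') + √3 * frob (F - F')) * (√3 * σlo⁻¹) := by
        grw [frob_transpose_mul_sub_le R R' F F', hlip, hR'norm, hinv]
        all_goals first | positivity | exact frob_nonneg _
    _ = (√2 + √3) * √3 * σlo⁻¹ * frob (F - F') := by ring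

/-- Lipschitz continuity of the polar rotation factor (d = 3): if all singular values of
`F` are at least `σ̲ > 0`, `F = R·S` and `F' = R'·S'` are polar decompositions with
rotations `R, R'` (so `‖R'‖_F ≤ √3`), and `F ↦ R(F)ᵀF` is `√2`-Lipschitz (instantiated at
this pair), then `‖R - R'‖_F ≤ (√2 + √3)·√3·σ̲⁻¹·‖F - F'‖_F`. -/
theorem stmt7 (F F' R R' S S' : Matrix (Fin 3) (Fin 3) ℝ)
    (σlo : ℝ) (hσ : 0 < σlo)
    (hRorth : Rᵀ * R = 1) (hR'orth : R'ᵀ * R' = 1)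
    (hSsym : S.IsSymm) (hSpd : S.PosDef)
    (hS'sym : S'.IsSymm) (hS'pd : S'.PosDef)
    (hF : F = R * S) (hF' : F' = R' * S')
    (hdetF : 0 < F.det) (hdetF' : 0 < F'.det)
    (hsing : ∀ x : Fin 3 → ℝ, σlo * evnorm x ≤ evnorm (F.mulVec x))
    (hR'norm : frob R' ≤ Real.sqrt 3)
    (hlip : frob (Rᵀ * F - R'ᵀ * F') ≤ Real.sqrt 2 * frob (F - F')) :
    frob (R - R') ≤ (Real.sqrt 2 + Real.sqrt 3) * Real.sqrt 3 * σlo⁻¹ * frob (F - F') :=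
  stmt7_general F F' R R' σlo hσ hdetF hsing hR'norm hlip
end

section
/- Let X^r be an invertible d×d matrix with σ_min(X^r) ≥ σ̲^r > 0, let y_0, y_1, …, y_{d+1} ∈ R^d with y_0 in the convex hull CH(y_1,…,y_{d+1}), and suppose the closed ball of radius ε > 0 centered at y_0 is contained in CH(y_1,…,y_{d+1}). Let X(y) = [y_2 − y_1, …, y_{d+1} − y_1]. Then the smallest singular value of X(y) satisfies σ_min(X(y)) ≥ ε/d, and consequently the deformation gradient F = X(y)·(X^r)^{−1} satisfies σ_min(F) ≥ ε/(d·σ_max(X^r)). -/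
open Matrix

lemma evnorm_nonneg {d : ℕ} (v : Fin d → ℝ) : 0 ≤ evnorm v := Real.sqrt_nonneg _

lemma evnorm_smul {d : ℕ} (c : ℝ) (v : Fin d → ℝ) : evnorm (c • v) = |c| * evnorm v := by
  unfold evnorm
  rw [← Real.sqrt_sq_eq_abs, ← Real.sqrt_mul (sq_nonneg c), Finset.mul_sum]
  congr 1
  apply Finset.sum_congr rfl
  intro i _
  simp [mul_pow]

lemma evnorm_pos {d : ℕ} {v : Fin d → ℝ} (hv : v ≠ 0) : 0 < evnorm v := by
  apply Real.sqrt_pos.2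
  obtain ⟨i, hi⟩ : ∃ i, v i ≠ 0 := by
    by_contra h
    push_neg at h
    exact hv (funext h)
  have h1 : 0 < (v i) ^ 2 := by positivity
  have h2 : (v i) ^ 2 ≤ ∑ j, (v j) ^ 2 :=
    Finset.single_le_sum (fun j _ => sq_nonneg (v j)) (Finset.mem_univ i)
  linarith

lemma norm_eq_evnorm {d : ℕ} (u : EuclideanSpace ℝ (Fin d)) :
    ‖u‖ = evnorm (fun i => u i) := by
  rw [EuclideanSpace.norm_eq]
  unfold evnorm
  congr 1
  apply Finset.sum_congr rfl
  intro i _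
  rw [Real.norm_eq_abs, sq_abs]

lemma evnorm_le_sqrt {d : ℕ} {v : Fin d → ℝ} (h : ∀ j, |v j| ≤ 1) :
    evnorm v ≤ Real.sqrt d := by
  apply Real.sqrt_le_sqrt
  calc ∑ j, (v j) ^ 2 ≤ ∑ _j : Fin d, (1 : ℝ) := by
        apply Finset.sum_le_sum
        intro j _
        rw [← sq_abs]
        nlinarith [h j, abs_nonneg (v j)]
    _ = d := by simp

/-- Singular value bound for the simplex edge matrix: if the closed ball of radius `ε > 0`
around `y₀` is contained in the simplex `CH(y₁,…,y_{d+1})`, and `y₀` lies in the hull,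
then `σ_min(X(y)) ≥ ε/d` where `X(y) = [y₂-y₁, …, y_{d+1}-y₁]`; consequently
`σ_min(F) ≥ ε/(d·σ_max(Xʳ))` for `F = X(y)·(Xʳ)⁻¹` with `Xʳ` invertible,
`σ_min(Xʳ) ≥ σ̲ʳ > 0` and `σ_max(Xʳ) ≤ s`. -/
theorem stmt8 (d : ℕ) (hd : 0 < d)
    (Xr : Matrix (Fin d) (Fin d) ℝ) (σr s : ℝ) (hσr : 0 < σr) (hs : 0 < s)
    (hXrUnit : IsUnit Xr.det)
    (hXrlo : ∀ x : Fin d → ℝ, σr * evnorm x ≤ evnorm (Xr.mulVec x))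
    (hXrhi : ∀ x : Fin d → ℝ, evnorm (Xr.mulVec x) ≤ s * evnorm x)
    (y : Fin (d + 1) → EuclideanSpace ℝ (Fin d)) (y0 : EuclideanSpace ℝ (Fin d))
    (ε : ℝ) (hε : 0 < ε)
    (hy0 : y0 ∈ convexHull ℝ (Set.range y))
    (hball : Metric.closedBall y0 ε ⊆ convexHull ℝ (Set.range y))
    (X : Matrix (Fin d) (Fin d) ℝ)
    (hX : ∀ (i j : Fin d), X i j = (y j.succ - y 0) i) :
    (∀ x : Fin d → ℝ, ε / d * evnorm x ≤ evnorm (X.mulVec x)) ∧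
    ∀ x : Fin d → ℝ, ε / (d * s) * evnorm x ≤ evnorm ((X * Xr⁻¹).mulVec x) := by
  have hd1 : (1 : ℝ) ≤ d := by exact_mod_cast hd
  -- barycentric coordinates lemma
  have key : ∀ p ∈ convexHull ℝ (Set.range y), ∃ ω : Fin d → ℝ,
      (∀ j, 0 ≤ ω j ∧ ω j ≤ 1) ∧ X.mulVec ω = fun i => p i - y 0 i := by
    intro p hp
    rw [convexHull_range_eq_exists_affineCombination] at hp
    obtain ⟨t, w, hw0, hw1, hac⟩ := hp
    set W : Fin (d + 1) → ℝ := fun i => if i ∈ t then w i else 0 with hWdef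
    have hW0 : ∀ i, 0 ≤ W i := by
      intro i
      simp only [hWdef]
      split
      · exact hw0 _ ‹_›
      · exact le_refl 0
    have hW1 : ∑ i, W i = 1 := by
      rw [← hw1]
      simp only [hWdef]
      rw [Finset.sum_ite_mem, Finset.univ_inter]
    have hWle1 : ∀ i, W i ≤ 1 := by
      intro i
      rw [← hW1]
      exact Finset.single_le_sum (fun j _ => hW0 j) (Finset.mem_univ i)
    have hsum : ∑ i, W i • y i = p := by
      rw [← hac, Finset.affineCombination_eq_linear_combination t y w hw1]
      simp only [hWdef, ite_smul, zero_smul]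
      rw [Finset.sum_ite_mem, Finset.univ_inter]
    refine ⟨fun j => W (Fin.succ j), fun j => ⟨hW0 _, hWle1 _⟩, ?_⟩
    funext i
    have hpi : p i = ∑ k, W k * y k i := by
      have h := congrArg (fun q : EuclideanSpace ℝ (Fin d) => EuclideanSpace.proj (𝕜 := ℝ) i q) hsum
      simpa [map_sum] using h.symm
    have : (X.mulVec fun j => W (Fin.succ j)) i = ∑ j : Fin d, W (Fin.succ j) * (y (Fin.succ j) i - y 0 i) := by
      simp only [Matrix.mulVec, dotProduct, hX]
      apply Finset.sum_congr rfl
      intro j _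
      simp [mul_comm]
    rw [this]
    have expand : ∑ j : Fin d, W j.succ * (y j.succ i - y 0 i)
        = ∑ k : Fin (d + 1), W k * (y k i - y 0 i) := by
      rw [Fin.sum_univ_succ]
      simp
    rw [expand]
    have : ∑ k : Fin (d + 1), W k * (y k i - y 0 i)
        = (∑ k, W k * y k i) - (∑ k, W k) * y 0 i := by
      rw [Finset.sum_mul, ← Finset.sum_sub_distrib]
      apply Finset.sum_congr rfl
      intro k _
      ring
    rw [this, hW1, hpi]
    ring
  -- main geometric estimate: for unit vectors u we can solve X v = ε u with small v
  have keyvec : ∀ u : EuclideanSpace ℝ (Fin d), ‖u‖ = 1 →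
      ∃ v : Fin d → ℝ, evnorm v ≤ Real.sqrt d ∧ X.mulVec v = fun i => ε * u i := by
    intro u hu
    obtain ⟨ω0, hω0, hXω0⟩ := key y0 hy0
    have hmem : y0 + ε • u ∈ convexHull ℝ (Set.range y) := by
      apply hball
      simp [Metric.mem_closedBall, dist_eq_norm, norm_smul, abs_of_pos hε, hu]
    obtain ⟨ω1, hω1, hXω1⟩ := key _ hmem
    refine ⟨ω1 - ω0, ?_, ?_⟩
    · apply evnorm_le_sqrt
      intro j
      have h1 := hω1 j
      have h0 := hω0 j
      rw [Pi.sub_apply]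
      rw [abs_le]
      constructor <;> [linarith [h1.1, h0.2]; linarith [h1.2, h0.1]]
    · rw [Matrix.mulVec_sub, hXω1, hXω0]
      funext i
      simp
  -- surjectivity, hence injectivity, of mulVec
  have hsolve : ∀ z : Fin d → ℝ, z ≠ 0 → ∃ v : Fin d → ℝ,
      evnorm v ≤ Real.sqrt d ∧ X.mulVec ((evnorm z / ε) • v) = z := by
    intro z hz
    have hn : 0 < evnorm z := evnorm_pos hz
    set n := evnorm z with hndef
    set u : EuclideanSpace ℝ (Fin d) := (WithLp.equiv 2 (Fin d → ℝ)).symm (n⁻¹ • z) with hudef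
    have hui : ∀ i, u i = n⁻¹ * z i := by intro i; simp [hudef]
    have hnu : ‖u‖ = 1 := by
      rw [norm_eq_evnorm]
      have : (fun i => u i) = n⁻¹ • z := by funext i; simp [hui]
      rw [this, evnorm_smul, abs_of_pos (by positivity), ← hndef]
      field_simp
    obtain ⟨v, hv, hXv⟩ := keyvec u hnu
    refine ⟨v, hv, ?_⟩
    rw [Matrix.mulVec_smul, hXv]
    funext i
    simp only [Pi.smul_apply, smul_eq_mul, hui]
    field_simp
  have hsurj : Function.Surjective X.mulVecLin := by
    intro z
    rcases eq_or_ne z 0 with rfl | hz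
    · exact ⟨0, by simp⟩
    · obtain ⟨v, _, hv⟩ := hsolve z hz
      exact ⟨(evnorm z / ε) • v, hv⟩
  have hinj : Function.Injective X.mulVecLin := LinearMap.injective_iff_surjective.mpr hsurj
  have part1 : ∀ x : Fin d → ℝ, ε / d * evnorm x ≤ evnorm (X.mulVec x) := by
    intro x
    rcases eq_or_ne (X.mulVec x) 0 with hz | hz
    · have hx0 : x = 0 := by
        apply hinj
        simp only [Matrix.mulVecLin_apply, hz, map_zero]
      rw [hx0]
      simp [Matrix.mulVec_zero, evnorm]
    · obtain ⟨v, hv, hXv⟩ := hsolve (X.mulVec x) hz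
      set n := evnorm (X.mulVec x) with hndef
      have hn : 0 < n := evnorm_pos hz
      have hxeq : x = (n / ε) • v := by
        apply hinj
        simp only [Matrix.mulVecLin_apply]
        exact hXv.symm
      have hex : evnorm x ≤ n / ε * Real.sqrt d := by
        rw [hxeq, evnorm_smul, abs_of_pos (by positivity)]
        exact mul_le_mul_of_nonneg_left hv (by positivity)
      have hsd : Real.sqrt d ≤ d := by
        have h1 : Real.sqrt d ≤ Real.sqrt ((d : ℝ) ^ 2) := Real.sqrt_le_sqrt (by nlinarith)
        rwa [Real.sqrt_sq (by positivity)] at h1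
      have step : ε / d * evnorm x ≤ ε / d * (n / ε * Real.sqrt d) :=
        mul_le_mul_of_nonneg_left hex (by positivity)
      have : ε / d * (n / ε * Real.sqrt d) = n * (Real.sqrt d / d) := by
        field_simp
      rw [this] at step
      have : n * (Real.sqrt d / d) ≤ n * 1 := by
        apply mul_le_mul_of_nonneg_left _ hn.le
        rw [div_le_one (by positivity)]
        exact hsd
      calc ε / d * evnorm x ≤ n * (Real.sqrt d / d) := step
        _ ≤ n * 1 := this
        _ = n := mul_one n
  refine ⟨part1, ?_⟩
  intro x
  set wv := Xr⁻¹.mulVec x with hwv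
  have hxw : Xr.mulVec wv = x := by
    rw [hwv, Matrix.mulVec_mulVec, Matrix.mul_nonsing_inv _ hXrUnit, Matrix.one_mulVec]
  have h2 : evnorm x ≤ s * evnorm wv := by
    rw [← hxw]; exact hXrhi wv
  have h3 : (X * Xr⁻¹).mulVec x = X.mulVec wv := by
    rw [hwv, Matrix.mulVec_mulVec]
  rw [h3]
  have h4 := part1 wv
  have h5 : ε / (d * s) * evnorm x ≤ ε / (d * s) * (s * evnorm wv) :=
    mul_le_mul_of_nonneg_left h2 (by positivity)
  have h6 : ε / (d * s) * (s * evnorm wv) = ε / d * evnorm wv := by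
    field_simp
  calc ε / (d * s) * evnorm x ≤ ε / (d * s) * (s * evnorm wv) := h5
    _ = ε / d * evnorm wv := h6
    _ ≤ evnorm (X.mulVec wv) := h4
end
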